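/- Let m ≥ 2 be an even integer. Then BDM(2,m) is not totally regular: for every i ∈ Z_m, the vertex (1,2i)_1 has the two distinct in-neighbours (0,i)_0 and (0,i+m/2)_0 through arcs, so it has in-degree at least 2; consequently, some vertex of BDM(2,m) has in-degree 0. -/
import Mathlib


/-- Vertices of `BDM(2,m)`: `(α, i)_β` is encoded as `(α, i, β)` with `α β : Bool`, `i : ZMod m`. -/
abbrev BDMVertex (m : ℕ) := Bool × ZMod m × Bool

/-- The unique out-neighbour (through an arc) of a vertex of `BDM(2,m)`. -/
def bdmOut (m : ℕ) : BDMVertex m → BDMVertex m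
  | (false, i, false) => (true, 2 * i, true)
  | (false, i, true) => (true, 2 * i + 1, false)
  | (true, i, false) => (false, -2 * i - 1, true)
  | (true, i, true) => (false, -2 * i - 2, false)

/-- The edges of `BDM(2,m)`: `(α,i)_0 ∼ (α,i)_1`. -/
def bdmEdge (m : ℕ) (u v : BDMVertex m) : Prop :=
  u.1 = v.1 ∧ u.2.1 = v.2.1 ∧ u.2.2 = !v.2.2

/-- The arcs of `BDM(2,m)`. -/
def bdmArc (m : ℕ) (u v : BDMVertex m) : Prop := v = bdmOut m u

/-- One step in the associated digraph of `BDM(2,m)` (edge or arc). -/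
def bdmStep (m : ℕ) (u v : BDMVertex m) : Prop := bdmEdge m u v ∨ bdmArc m u v

/-- `hasWalk step d u v` : there is a directed walk of length `d` from `u` to `v`. -/
def hasWalk {V : Type*} (step : V → V → Prop) : ℕ → V → V → Prop
  | 0, u, v => u = v
  | d + 1, u, v => ∃ w, step u w ∧ hasWalk step d w v

/-- For every even $m ≥ 2$, the mixed graph $BDM(2,m)$ is not totally regular:
for every $i ∈ ℤ_m$, the vertex $(1,2i)_1$ has the two distinct in-neighbours
$(0,i)_0$ and $(0,i+m/2)_0$ through arcs, and consequently some vertex has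
in-degree $0$. -/
theorem BDM_even_m_not_totally_regular (m : ℕ) (hm : 2 ≤ m) (hme : Even m) :
    (∀ i : ZMod m,
      bdmArc m (false, i, false) (true, 2 * i, true) ∧
      bdmArc m (false, i + ((m / 2 : ℕ) : ZMod m), false) (true, 2 * i, true) ∧
      ((false, i, false) : BDMVertex m) ≠ (false, i + ((m / 2 : ℕ) : ZMod m), false)) ∧
    (∃ v : BDMVertex m, ∀ u : BDMVertex m, ¬ bdmArc m u v) := by
  haveI : NeZero m := ⟨by omega⟩
  obtain ⟨k, hk⟩ := hme
  have hm2 : m = 2 * k := by omega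
  have hmm : ((m : ℕ) : ZMod m) = 0 := ZMod.natCast_self m
  have hhalf : ((m / 2 : ℕ) : ZMod m) ≠ 0 := by
    intro h
    rw [ZMod.natCast_eq_zero_iff] at h
    have := Nat.le_of_dvd (by omega) h
    omega
  constructor
  · intro i
    refine ⟨rfl, ?_, ?_⟩
    · show _ = bdmOut m _
      simp only [bdmOut]
      have : 2 * (((m / 2 : ℕ) : ZMod m)) = 0 := by
        have : ((2 * (m / 2) : ℕ) : ZMod m) = 0 := by
          have h2 : 2 * (m / 2) = m := by omega
          rw [h2, hmm]
        push_cast at this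
        linear_combination this
      refine Prod.ext rfl (Prod.ext ?_ rfl)
      show (2 * i : ZMod m) = 2 * (i + _)
      rw [mul_add, this, add_zero]
    · intro h
      have h2 := congrArg (fun v : BDMVertex m => v.2.1) h
      simp at h2
      exact hhalf h2
  · refine ⟨(true, ((m / 2 : ℕ) : ZMod m) + ((m / 2 : ℕ) : ZMod m) + 1, true), ?_⟩
    intro u hu
    obtain ⟨⟨⟩|⟨⟩, i, ⟨⟩|⟨⟩⟩ := u <;> simp [bdmArc, bdmOut, Prod.ext_iff] at hu
    -- remaining case: (false, i, false): 2*i = m/2+m/2+1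
    have hmz : ((m / 2 : ℕ) : ZMod m) + ((m / 2 : ℕ) : ZMod m) = 0 := by
      have h2 : ((m / 2 + m / 2 : ℕ) : ZMod m) = 0 := by
        have : m / 2 + m / 2 = m := by omega
        rw [this, hmm]
      push_cast at h2
      exact h2
    rw [hmz, zero_add] at hu
    -- hu : 1 = 2 * i in ZMod m, m even: contradiction via cast to ZMod 2
    have hdvd : (2 : ℕ) ∣ m := ⟨k, hm2⟩
    have h1 := congrArg (ZMod.castHom hdvd (ZMod 2)) hu
    rw [map_one, map_mul, map_ofNat] at h1
    rw [show ((2 : ZMod 2)) = 0 by decide, zero_mul] at h1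
    exact one_ne_zero h1
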